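/- arXiv:math/0701905 — 2 statements merged into one kernel-verified Lean document; each statement's English description precedes it below -/
import Mathlib

section
/- Let V be a finite-dimensional real vector space equipped with a nondegenerate alternating bilinear form ω, and let G be a compact topological group acting on V by continuous linear maps preserving ω (i.e., ω(g·v, g·w) = ω(v, w) for all g ∈ G and v, w ∈ V). Then the subspace V_G = {v ∈ V | g·v = v for all g ∈ G} of G-fixed vectors is a symplectic subspace of V, i.e., the restriction of ω to V_G is nondegenerate. -/
open MeasureTheory

/-- Let `V` be a finite-dimensional real vector space equipped with a
nondegenerate alternating bilinear form `ω`, and let `G` be a compact topological group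
acting on `V` by continuous linear maps preserving `ω`. Then the subspace of `G`-fixed
vectors is a symplectic subspace of `V`: the restriction of `ω` to it is nondegenerate. -/
theorem fixed_subspace_symplectic
    {V : Type*} [NormedAddCommGroup V] [NormedSpace ℝ V] [FiniteDimensional ℝ V]
    {G : Type*} [Group G] [TopologicalSpace G] [IsTopologicalGroup G] [CompactSpace G]
    (ω : V →ₗ[ℝ] V →ₗ[ℝ] ℝ)
    (halt : ∀ v : V, ω v v = 0)
    (hnondeg : ∀ v : V, (∀ w : V, ω v w = 0) → v = 0)
    (ρ : G →* (V →L[ℝ] V))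
    (hcont : Continuous fun p : G × V => ρ p.1 p.2)
    (hinv : ∀ (g : G) (v w : V), ω (ρ g v) (ρ g w) = ω v w) :
    ∀ v : V, (∀ g : G, ρ g v = v) →
      (∀ w : V, (∀ g : G, ρ g w = w) → ω v w = 0) → v = 0 := by
  intro v hv hvw
  borelize G
  let μ : Measure G := Measure.haar
  haveI : IsFiniteMeasure μ := CompactSpace.isFiniteMeasure
  -- the averaging projection
  apply hnondeg
  intro w
  -- the map g ↦ ρ g w is continuous, hence integrable
  have hcw : Continuous fun g : G => ρ g w :=
    hcont.comp (continuous_id.prodMk continuous_const)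
  have hsupp : HasCompactSupport fun g : G => ρ g w :=
    IsCompact.of_isClosed_subset isCompact_univ (isClosed_tsupport _) (Set.subset_univ _)
  have hint : Integrable (fun g : G => ρ g w) μ :=
    hcw.integrable_of_hasCompactSupport hsupp
  -- define the average
  set Pw : V := ∫ g, ρ g w ∂μ with hPw
  -- Pw is fixed by every h
  have hfix : ∀ h : G, ρ h Pw = Pw := by
    intro h
    have h1 : ρ h Pw = ∫ g, ρ h (ρ g w) ∂μ := ((ρ h).integral_comp_comm hint).symm
    have h2 : (fun g : G => ρ h (ρ g w)) = fun g : G => ρ (h * g) w := by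
      funext g
      rw [map_mul ρ]
      rfl
    rw [h1, h2]
    exact integral_mul_left_eq_self (fun g : G => ρ g w) h
  -- the continuous linear functional ω v
  let L : V →L[ℝ] ℝ := LinearMap.toContinuousLinearMap (ω v)
  have hL : L Pw = ∫ g, ω v (ρ g w) ∂μ := (L.integral_comp_comm hint).symm
  -- pointwise, ω v (ρ g w) = ω v w
  have hpt : ∀ g : G, ω v (ρ g w) = ω v w := by
    intro g
    have := hinv g⁻¹ v (ρ g w)
    have hcomp : ρ g⁻¹ (ρ g w) = w := by
      have : (ρ g⁻¹).comp (ρ g) = ρ (g⁻¹ * g) := (map_mul ρ g⁻¹ g).symm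
      have h2 : ρ g⁻¹ (ρ g w) = ρ (g⁻¹ * g) w := by
        rw [← this]; rfl
      rw [h2, inv_mul_cancel, map_one]; rfl
    rw [hv g⁻¹, hcomp] at this; exact this.symm
  have hconst : ∫ g, ω v (ρ g w) ∂μ = (μ Set.univ).toReal • (ω v w) := by
    simp [hpt, integral_const, Measure.real]
  have hzero : L Pw = 0 := hvw Pw hfix
  rw [hL, hconst] at hzero
  have hμpos : 0 < (μ Set.univ).toReal := by
    refine ENNReal.toReal_pos ?_ (measure_ne_top μ _)
    exact (isOpen_univ.measure_pos μ Set.univ_nonempty).ne'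
  have : ω v w = 0 := by
    rcases mul_eq_zero.mp hzero with h | h
    · exact absurd h hμpos.ne'
    · exact h
  exact this
end

section
/- Let V be a finite-dimensional real vector space equipped with a possibly degenerate alternating bilinear form ω, and let G be a compact topological group acting on V by continuous linear maps preserving ω. Let V_G = {v ∈ V | g·v = v for all g ∈ G} be the subspace of G-fixed vectors, and let ω_G denote the restriction of ω to V_G. Then the kernel of ω_G equals ker ω ∩ V_G, that is, {v ∈ V_G | ω(v,w) = 0 for all w ∈ V_G} = {v ∈ V_G | ω(v,w) = 0 for all w ∈ V}. -/
open MeasureTheory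

/-- Let `V` be a finite-dimensional real vector space with a possibly
degenerate alternating bilinear form `ω`, and `G` a compact topological group acting on
`V` by continuous linear maps preserving `ω`. Then the kernel of the restriction of `ω`
to the subspace of `G`-fixed vectors equals `ker ω ∩ V_G`: for a fixed vector `v`,
`ω v w = 0` for all fixed `w` iff `ω v w = 0` for all `w ∈ V`. -/
theorem kernel_restriction_fixed_subspace
    {V : Type*} [NormedAddCommGroup V] [NormedSpace ℝ V] [FiniteDimensional ℝ V]
    {G : Type*} [Group G] [TopologicalSpace G] [IsTopologicalGroup G] [CompactSpace G]
    (ω : V →ₗ[ℝ] V →ₗ[ℝ] ℝ)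
    (halt : ∀ v : V, ω v v = 0)
    (ρ : G →* (V →L[ℝ] V))
    (hcont : Continuous fun p : G × V => ρ p.1 p.2)
    (hinv : ∀ (g : G) (v w : V), ω (ρ g v) (ρ g w) = ω v w) :
    ∀ v : V, (∀ g : G, ρ g v = v) →
      ((∀ w : V, (∀ g : G, ρ g w = w) → ω v w = 0) ↔ (∀ w : V, ω v w = 0)) := by
  intro v hv
  constructor
  · intro h w
    letI : MeasurableSpace G := borel G
    haveI : BorelSpace G := ⟨rfl⟩
    let K₀ : TopologicalSpace.PositiveCompacts G :=
      ⟨⟨Set.univ, isCompact_univ⟩, by simp⟩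
    set μ : Measure G := Measure.haarMeasure K₀ with hμ
    haveI : IsProbabilityMeasure μ := by
      constructor
      have h1 := Measure.haarMeasure_self (K₀ := K₀)
      exact h1
    have hc : Continuous fun g : G => ρ g w :=
      hcont.comp (continuous_id.prodMk continuous_const)
    have hint : Integrable (fun g : G => ρ g w) μ :=
      hc.integrable_of_hasCompactSupport (HasCompactSupport.of_compactSpace _)
    set wbar : V := ∫ g, ρ g w ∂μ with hwbar
    have hfix : ∀ g₀ : G, ρ g₀ wbar = wbar := by
      intro g₀
      rw [hwbar, ← ContinuousLinearMap.integral_comp_comm (ρ g₀) hint]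
      have heq : ∀ g : G, ρ g₀ (ρ g w) = ρ (g₀ * g) w := by
        intro g; rw [map_mul]; rfl
      simp_rw [heq]
      exact integral_mul_left_eq_self (fun g : G => ρ g w) g₀
    have hψ : ∀ g : G, ω v (ρ g w) = ω v w := by
      intro g
      have h1 : (ρ g) ((ρ g⁻¹) v) = v := by rw [hv g⁻¹]; exact hv g
      calc ω v (ρ g w) = ω (ρ g (ρ g⁻¹ v)) (ρ g w) := by rw [h1]
        _ = ω (ρ g⁻¹ v) w := hinv g _ w
        _ = ω v w := by rw [hv g⁻¹]
    have hωv : ω v wbar = ω v w := by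
      rw [hwbar]
      show (LinearMap.toContinuousLinearMap (ω v)) (∫ g, ρ g w ∂μ) = ω v w
      rw [← ContinuousLinearMap.integral_comp_comm
        (LinearMap.toContinuousLinearMap (ω v)) hint]
      simp only [LinearMap.coe_toContinuousLinearMap']
      simp_rw [hψ]
      simp
    rw [← hωv]
    exact h wbar hfix
  · intro h w _
    exact h w
end
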